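/- For every μ with 1/2 < μ ≤ 1, the commuter h_μ : [0,1] → [0,1] is monotone increasing; that is, x ≤ y implies h_μ(x) ≤ h_μ(y) for all x, y ∈ [0,1]. -/

import Mathlib

/-!
For `x ≤ y` in `[0,1]` we show `h x ≤ h y + 2⁻ⁿ` by induction on `n`. The functional equation
sends both points into `[0,1]` through `x ↦ 2μx` on `[0,1/2]` and `x ↦ 2μ(1-x)` on `(1/2,1]`;
the second map reverses order but is composed with `t ↦ 1 - t`, so in either case the error
term is halved. If the points lie on different sides of `1/2`, then `h x ≤ 1/2 ≤ h y`.
-/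

open Set

/-- `h : [0,1] → [0,1]` satisfies the commuter functional equation for `T_μ`:
`h(x) = (1/2)·h(2μx)` for `0 ≤ x ≤ 1/2` and `h(x) = 1 - (1/2)·h(2μ(1-x))` for `1/2 < x ≤ 1`. -/
def IsCommuter (μ : ℝ) (h : ℝ → ℝ) : Prop :=
  (∀ x ∈ Icc (0:ℝ) 1, h x ∈ Icc (0:ℝ) 1) ∧
  (∀ x : ℝ, 0 ≤ x → x ≤ 1/2 → h x = (1/2) * h (2*μ*x)) ∧
  (∀ x : ℝ, 1/2 < x → x ≤ 1 → h x = 1 - (1/2) * h (2*μ*(1-x)))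

theorem two_mul_mul_mem_Icc {μ x : ℝ} (hμ0 : 0 ≤ μ) (hμ1 : μ ≤ 1) (hx0 : 0 ≤ x)
    (hx : x ≤ 1 / 2) : 2 * μ * x ∈ Icc (0 : ℝ) 1 :=
  ⟨by positivity, by nlinarith⟩

namespace IsCommuter

variable {μ : ℝ} {h : ℝ → ℝ}

theorem le_half (hc : IsCommuter μ h) (hμ0 : 0 ≤ μ) (hμ1 : μ ≤ 1) {x : ℝ} (hx0 : 0 ≤ x)
    (hx : x ≤ 1 / 2) : h x ≤ 1 / 2 := by
  rw [hc.2.1 x hx0 hx]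
  linarith [(hc.1 _ (two_mul_mul_mem_Icc hμ0 hμ1 hx0 hx)).2]

theorem half_le (hc : IsCommuter μ h) (hμ0 : 0 ≤ μ) (hμ1 : μ ≤ 1) {x : ℝ} (hx : 1 / 2 < x)
    (hx1 : x ≤ 1) : 1 / 2 ≤ h x := by
  rw [hc.2.2 x hx hx1]
  linarith [(hc.1 _ (two_mul_mul_mem_Icc hμ0 hμ1 (x := 1 - x) (by linarith) (by linarith))).2]

theorem le_add_half_pow (hc : IsCommuter μ h) (hμ0 : 0 ≤ μ) (hμ1 : μ ≤ 1) (n : ℕ) :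
    ∀ x ∈ Icc (0 : ℝ) 1, ∀ y ∈ Icc (0 : ℝ) 1, x ≤ y → h x ≤ h y + (1 / 2) ^ n := by
  induction n with
  | zero =>
    intro x hx y hy _
    linarith [(hc.1 x hx).2, (hc.1 y hy).1, pow_zero (1 / 2 : ℝ)]
  | succ n ih =>
    rintro x ⟨hx0, hx1⟩ y ⟨hy0, hy1⟩ hxy
    have hpow : (1 / 2 : ℝ) ^ (n + 1) = (1 / 2) ^ n / 2 := by rw [pow_succ]; ring
    rcases le_or_gt y (1 / 2) with hy | hy
    · have hx : x ≤ 1 / 2 := hxy.trans hy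
      have hrec := ih _ (two_mul_mul_mem_Icc hμ0 hμ1 hx0 hx) _
        (two_mul_mul_mem_Icc hμ0 hμ1 hy0 hy) (by nlinarith)
      rw [hc.2.1 x hx0 hx, hc.2.1 y hy0 hy]
      linarith
    rcases le_or_gt x (1 / 2) with hx | hx
    · linarith [hc.le_half hμ0 hμ1 hx0 hx, hc.half_le hμ0 hμ1 hy hy1,
        pow_pos (by norm_num : (0 : ℝ) < 1 / 2) (n + 1)]
    · have hrec := ih _ (two_mul_mul_mem_Icc hμ0 hμ1 (x := 1 - y) (by linarith) (by linarith)) _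
        (two_mul_mul_mem_Icc hμ0 hμ1 (x := 1 - x) (by linarith) (by linarith)) (by nlinarith)
      rw [hc.2.2 x hx hx1, hc.2.2 y hy hy1]
      linarith

end IsCommuter

/-- For `1/2 < μ ≤ 1`, the commuter `h_μ` is monotone increasing on `[0,1]`. -/
theorem commuter_monotoneOn (μ : ℝ) (hμ1 : 1/2 < μ) (hμ2 : μ ≤ 1)
    (h : ℝ → ℝ) (hc : IsCommuter μ h) :
    MonotoneOn h (Icc (0:ℝ) 1) := by
  intro x hx y hy hxy
  refine le_of_forall_pos_le_add fun ε hε => ?_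
  obtain ⟨n, hn⟩ := exists_pow_lt_of_lt_one hε (by norm_num : (1 / 2 : ℝ) < 1)
  linarith [hc.le_add_half_pow (by linarith) hμ2 n x hx y hy hxy]
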